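/- arXiv:0903.1743 — 3 statements merged into one kernel-verified Lean document; each statement's English description precedes it below -/
import Mathlib

section
/- With the convention p(m) = 0 for m < 0 and p(0) = 1, the partition function satisfies the recursion p(n) = ∑_{m≥1} (-1)^{m-1} [ p(n - m(3m-1)/2) + p(n - m(3m+1)/2) ] for all n ≥ 1. -/
/-!
The generating function `∑ p(n) Xⁿ = ∏ᵢ (1 + Xⁱ + X²ⁱ + ⋯)` is the inverse of `∏ᵢ (1 - Xⁱ)`,
which by Euler's pentagonal number theorem equals `∑ₖ (-1)ᵏ X^{k(3k-1)/2}`, `k` ranging over `ℤ`.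
The coefficient of `Xⁿ`, `n ≥ 1`, in the product of the two series is therefore `0`, and it is
`∑ₖ (-1)ᵏ p(n - k(3k-1)/2)`; the terms `k = m` and `k = -m` give the two pentagonal numbers of
the recursion.
-/

/-- The partition function extended to `ℤ` with `p(m) = 0` for `m < 0`
(and `p(0) = 1`, the empty partition). -/
noncomputable def partitionFun (z : ℤ) : ℤ :=
  if 0 ≤ z then (Fintype.card (Nat.Partition z.toNat) : ℤ) else 0

open PowerSeries PowerSeries.WithPiTopology Finset

noncomputable def partitionSeries : ℤ⟦X⟧ := PowerSeries.mk fun n ↦ partitionFun n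

theorem hasProd_partitionSeries :
    HasProd (fun i ↦ ∑' j : ℕ, (X : ℤ⟦X⟧) ^ ((i + 1) * j)) partitionSeries := by
  have h := Nat.Partition.hasProd_powerSeriesMk_card_restricted ℤ (fun _ ↦ True)
  have h_eq : partitionSeries =
      PowerSeries.mk fun n ↦ (#(Nat.Partition.restricted n fun _ ↦ True) : ℤ) := by
    ext n
    simp [partitionSeries, partitionFun, Nat.Partition.restricted]
  rw [h_eq]
  simpa using h

theorem partitionSeries_mul_pentagonalSeries : partitionSeries * pentagonalSeries ℤ = 1 := by
  have h := hasProd_partitionSeries.mul (hasProd_one_sub_X_pow ℤ)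
  have h_geom (i : ℕ) : (∑' j : ℕ, (X : ℤ⟦X⟧) ^ ((i + 1) * j)) * (1 - X ^ (i + 1)) = 1 := by
    simp_rw [pow_mul]
    exact tsum_pow_mul_one_sub_of_constantCoeff_eq_zero (by simp)
  simp only [h_geom] at h
  exact h.unique hasProd_one

theorem partitionFun_natCast_sub (n a : ℕ) :
    partitionFun ((n : ℤ) - a) = if a ≤ n then partitionFun ↑(n - a) else 0 := by
  split_ifs with h
  · rw [Nat.cast_sub h]
  · rw [partitionFun, if_neg (by omega)]

theorem hasSum_negOnePow_mul_partitionFun_sub_pentagonal {n : ℕ} (hn : n ≠ 0) :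
    HasSum (fun k : ℤ ↦ (k.negOnePow : ℤ) * partitionFun (n - pentagonal k)) 0 := by
  have h := (hasSum_pentagonalSeries ℤ).mul_right partitionSeries
  rw [mul_comm, partitionSeries_mul_pentagonalSeries, hasSum_iff_hasSum_coeff] at h
  have h_n := h n
  rw [coeff_one, if_neg hn] at h_n
  refine h_n.congr_fun fun k ↦ ?_
  rw [mul_assoc, ← map_intCast (C (R := ℤ)), coeff_C_mul, coeff_X_pow_mul',
    partitionFun_natCast_sub, partitionSeries, coeff_mk, Int.cast_id]

theorem natAbs_le_pentagonal (k : ℤ) : k.natAbs ≤ pentagonal k := by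
  have := two_mul_natCast_pentagonal k
  zify
  rcases le_or_gt 0 k with h | h
  · rw [abs_of_nonneg h]; nlinarith
  · rw [abs_of_neg h]; nlinarith

theorem pentagonal_natCast (m : ℕ) : pentagonal m = m * (3 * m - 1) / 2 := by
  rcases Nat.eq_zero_or_pos m with rfl | hm
  · rfl
  apply Nat.cast_injective (R := ℤ)
  rw [natCast_pentagonal]
  push_cast [Nat.cast_sub (by omega : 1 ≤ 3 * m)]
  rfl

theorem pentagonal_neg_natCast (m : ℕ) : pentagonal (-m) = m * (3 * m + 1) / 2 := by
  apply Nat.cast_injective (R := ℤ)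
  rw [natCast_pentagonal]
  push_cast
  ring_nf

theorem sum_Icc_negOnePow_mul_partitionFun_sub_pentagonal {n : ℕ} (hn : n ≠ 0) :
    ∑ k ∈ Icc (-n : ℤ) n, (k.negOnePow : ℤ) * partitionFun (n - pentagonal k) = 0 := by
  refine (hasSum_sum_of_ne_finset_zero fun k hk ↦ ?_).unique
    (hasSum_negOnePow_mul_partitionFun_sub_pentagonal hn)
  have h_abs := natAbs_le_pentagonal k
  rw [mem_Icc] at hk
  rw [partitionFun, if_neg (by omega), mul_zero]

theorem sum_Icc_neg_eq_add_sum {M : Type*} [AddCommGroup M] (f : ℤ → M) (N : ℕ) :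
    ∑ k ∈ Icc (-N : ℤ) N, f k = f 0 + ∑ m ∈ Icc 1 N, (f m + f (-m)) := by
  induction N with
  | zero => simp
  | succ N ih =>
    rw [Nat.cast_succ, sum_Icc_succ_eq_add_endpoints, ih, sum_Icc_succ_top (by omega)]
    push_cast
    abel

/-- Pentagonal recursion for the partition function:
`p(n) = ∑_{m≥1} (-1)^{m-1} [p(n - m(3m-1)/2) + p(n - m(3m+1)/2)]` for `n ≥ 1`. -/
theorem stmt_5 (n : ℕ) (hn : 1 ≤ n) :
    partitionFun n =
      ∑ m ∈ Finset.Icc 1 n, (-1 : ℤ) ^ (m - 1) *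
        (partitionFun ((n : ℤ) - (m * (3 * m - 1) / 2 : ℕ)) +
         partitionFun ((n : ℤ) - (m * (3 * m + 1) / 2 : ℕ))) := by
  have h := sum_Icc_negOnePow_mul_partitionFun_sub_pentagonal (n := n) (by omega)
  rw [sum_Icc_neg_eq_add_sum] at h
  have h_pair : ∀ m ∈ Icc 1 n,
      ((m : ℤ).negOnePow : ℤ) * partitionFun (n - pentagonal m) +
        ((-m : ℤ).negOnePow : ℤ) * partitionFun (n - pentagonal (-m)) =
      -((-1 : ℤ) ^ (m - 1) * (partitionFun ((n : ℤ) - (m * (3 * m - 1) / 2 : ℕ)) +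
         partitionFun ((n : ℤ) - (m * (3 * m + 1) / 2 : ℕ)))) := by
    intro m hm
    obtain ⟨k, rfl⟩ := Nat.exists_eq_add_one.2 (mem_Icc.1 hm).1
    rw [Int.negOnePow_neg, Int.coe_negOnePow_natCast, pentagonal_natCast, pentagonal_neg_natCast,
      pow_succ, Nat.add_sub_cancel]
    ring
  rw [sum_congr rfl h_pair, sum_neg_distrib] at h
  simpa [add_neg_eq_zero, pentagonal_def] using h
end

section
/- With notation as in the recursion theorem for σ_x^{(A)} over a finite sequence A = (a_1,…,a_k), if n > b_{2^k} = a_1 + a_2 + … + a_k, then σ_x^{(A)}(n) = ∑_{i=2}^{2^k} (-1)^{s(2i-1)} σ_x^{(A)}(n - b_i). -/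
/-- Binary digit sum: number of ones in the binary expansion of `n`. -/
def binDigitSum (n : ℕ) : ℕ := (Nat.digits 2 n).sum

/-- `b_i(x) = ∑_{j ∈ S_i} a_j^x` where `i - 1 = ∑_{j ∈ S_i} 2^{j-1}` is the binary
expansion of `i-1` (indices `1 ≤ j ≤ k`). -/
noncomputable def bAssoc (k : ℕ) (a : ℕ → ℕ) (x : ℝ) (i : ℕ) : ℝ :=
  ∑ j ∈ Finset.Icc 1 k, if (i - 1).testBit (j - 1) then (a j : ℝ) ^ x else 0

/-- `b_i = b_i(1) = ∑_{j ∈ S_i} a_j`. -/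
def bAssocNat (k : ℕ) (a : ℕ → ℕ) (i : ℕ) : ℕ :=
  ∑ j ∈ Finset.Icc 1 k, if (i - 1).testBit (j - 1) then a j else 0

/-- `σ_x^{(A)}(n) = ∑_{j : a_j ∣ n} a_j^x` for `n ≥ 1` (with multiplicity), `0` for `n ≤ 0`. -/
noncomputable def sigmaSeq (k : ℕ) (a : ℕ → ℕ) (x : ℝ) (n : ℤ) : ℝ :=
  if 0 < n then ∑ j ∈ Finset.Icc 1 k, (if (a j : ℤ) ∣ n then (a j : ℝ) ^ x else 0) else 0

/-!
Writing `i - 1 = ∑_{t ∈ S} 2^t` identifies `1 ≤ i ≤ 2^k` with the subsets `S ⊆ {0, …, k-1}`, turns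
`b_i` into `∑_{t ∈ S} a_{t+1}` and `(-1)^{s(i-1)}` into `(-1)^{|S|}`. Once `n > a_1 + ⋯ + a_k`,
every `n - b_i` is positive, so each `σ_x^{(A)}(n - b_i)` is a sum of the `a_j`-periodic functions
`m ↦ [a_j ∣ m] a_j^x`. For a fixed `j`, pairing `S` with `S ∪ {j}` leaves the periodic term
unchanged and flips the sign, so `∑_{i=1}^{2^k} (-1)^{s(i-1)} σ_x^{(A)}(n - b_i) = 0`. Isolating
`i = 1` and using `s(2i - 1) = s(i - 1) + 1` gives the recursion.
-/

open Finset

lemma Finset.sum_Icc_one_eq_sum_range {M : Type*} [AddCommMonoid M] (N : ℕ) (f : ℕ → M) :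
    ∑ i ∈ Icc 1 N, f i = ∑ i ∈ range N, f (i + 1) := by
  rw [range_eq_Ico, sum_Ico_add', Ico_add_one_right_eq_Icc]

lemma Finset.sum_powerset_neg_one_pow_card_mul_periodic_eq_zero {ι R : Type*} [DecidableEq ι]
    [CommRing R] {s : Finset ι} {j : ι} (hj : j ∈ s) (c : ι → ℤ) {g : ℤ → R}
    (hg : Function.Periodic g (c j)) (m : ℤ) :
    ∑ t ∈ s.powerset, (-1 : R) ^ t.card * g (m - ∑ i ∈ t, c i) = 0 := by
  rw [← insert_erase hj, sum_powerset_insert (notMem_erase j s), ← sum_add_distrib]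
  refine sum_eq_zero fun t ht => ?_
  have hjt : j ∉ t := fun h => notMem_erase j s (mem_powerset.mp ht h)
  rw [card_insert_of_notMem hjt, sum_insert hjt, ← sub_sub, sub_right_comm, hg.sub_eq, pow_succ]
  ring

namespace Nat

lemma testBit_sum_two_pow (s : Finset ℕ) (t : ℕ) : (∑ i ∈ s, 2 ^ i).testBit t ↔ t ∈ s := by
  rw [← mem_bitIndices, ← List.mem_toFinset,
    Finset.toFinset_bitIndices_sum_two_pow]

lemma lt_two_pow_iff_bitIndices_subset {m k : ℕ} : m < 2 ^ k ↔ m.bitIndices.toFinset ⊆ range k := by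
  constructor
  · intro h t ht
    rw [List.mem_toFinset] at ht
    exact mem_range.mpr <| (Nat.pow_lt_pow_iff_right (by norm_num)).mp
      ((two_pow_le_of_mem_bitIndices ht).trans_lt h)
  · intro h
    refine lt_pow_two_of_testBit m fun t ht => ?_
    by_contra hbit
    have := mem_range.mp (h (List.mem_toFinset.mpr (mem_bitIndices.mpr (by simpa using hbit))))
    omega

end Nat

lemma Finset.sum_Icc_two_pow_eq_sum_powerset {M : Type*} [AddCommMonoid M] (k : ℕ) (f : ℕ → M) :
    ∑ i ∈ Icc 1 (2 ^ k), f i = ∑ s ∈ (range k).powerset, f (∑ i ∈ s, 2 ^ i + 1) := by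
  rw [sum_Icc_one_eq_sum_range]
  exact sum_equiv Finset.equivBitIndices
    (fun m => by simp [Nat.lt_two_pow_iff_bitIndices_subset]) (fun m _ => by simp)

lemma binDigitSum_eq_length_bitIndices (n : ℕ) : binDigitSum n = n.bitIndices.length := by
  induction n using Nat.strong_induction_on with
  | _ n ih =>
  rcases Nat.eq_zero_or_pos n with rfl | hn
  · simp [binDigitSum]
  have hdigits : binDigitSum n = n % 2 + binDigitSum (n / 2) := by
    rw [binDigitSum, Nat.digits_def' (by norm_num) hn, List.sum_cons, binDigitSum]
  rw [hdigits, ih (n / 2) (by omega)]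
  rcases Nat.even_or_odd' n with ⟨m, rfl | rfl⟩
  · rw [Nat.mul_mod_right, Nat.mul_div_cancel_left m two_pos]
    simp
  · rw [show (2 * m + 1) % 2 = 1 by omega, show (2 * m + 1) / 2 = m by omega]
    simp [Nat.add_comm 1]

lemma binDigitSum_sum_two_pow (s : Finset ℕ) : binDigitSum (∑ i ∈ s, 2 ^ i) = s.card := by
  rw [binDigitSum_eq_length_bitIndices, ← List.toFinset_card_of_nodup Nat.bitIndices_nodup,
    Finset.toFinset_bitIndices_sum_two_pow]

lemma neg_one_pow_binDigitSum_two_mul_sub_one {R : Type*} [Ring R] {i : ℕ} (hi : 1 ≤ i) :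
    (-1 : R) ^ binDigitSum (2 * i - 1) = -(-1) ^ binDigitSum (i - 1) := by
  obtain ⟨m, rfl⟩ := Nat.exists_eq_add_of_le' hi
  rw [show 2 * (m + 1) - 1 = 2 * m + 1 by omega, Nat.add_sub_cancel,
    binDigitSum_eq_length_bitIndices, binDigitSum_eq_length_bitIndices]
  simp [pow_succ]

lemma bAssocNat_sum_two_pow_add_one {k : ℕ} {s : Finset ℕ} (hs : s ⊆ range k) (a : ℕ → ℕ) :
    bAssocNat k a (∑ i ∈ s, 2 ^ i + 1) = ∑ i ∈ s, a (i + 1) := by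
  simp only [bAssocNat, sum_Icc_one_eq_sum_range, Nat.add_sub_cancel, Nat.testBit_sum_two_pow,
    sum_ite_mem, inter_eq_right.mpr hs]

lemma sigmaSeq_of_pos {m : ℤ} (hm : 0 < m) (k : ℕ) (a : ℕ → ℕ) (x : ℝ) :
    sigmaSeq k a x m = ∑ t ∈ range k, if (a (t + 1) : ℤ) ∣ m then (a (t + 1) : ℝ) ^ x else 0 := by
  rw [sigmaSeq, if_pos hm, sum_Icc_one_eq_sum_range]

lemma sum_powerset_neg_one_pow_card_mul_sigmaSeq_eq_zero {k : ℕ} {a : ℕ → ℕ} (x : ℝ) {n : ℕ}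
    (hn : ∑ j ∈ Icc 1 k, a j < n) :
    ∑ s ∈ (range k).powerset,
      (-1 : ℝ) ^ s.card * sigmaSeq k a x (n - ∑ i ∈ s, (a (i + 1) : ℤ)) = 0 := by
  have hpos : ∀ s ∈ (range k).powerset, (0 : ℤ) < n - ∑ i ∈ s, (a (i + 1) : ℤ) := by
    intro s hs
    have : ∑ i ∈ s, a (i + 1) ≤ ∑ j ∈ Icc 1 k, a j := by
      rw [sum_Icc_one_eq_sum_range]
      exact sum_le_sum_of_subset (mem_powerset.mp hs)
    have : ∑ i ∈ s, (a (i + 1) : ℤ) < n := by exact_mod_cast this.trans_lt hn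
    omega
  calc _ = ∑ t ∈ range k, ∑ s ∈ (range k).powerset, (-1 : ℝ) ^ s.card *
          if (a (t + 1) : ℤ) ∣ n - ∑ i ∈ s, (a (i + 1) : ℤ) then (a (t + 1) : ℝ) ^ x else 0 := by
        rw [sum_comm]
        exact sum_congr rfl fun s hs => by rw [sigmaSeq_of_pos (hpos s hs), mul_sum]
    _ = 0 := sum_eq_zero fun t ht =>
        sum_powerset_neg_one_pow_card_mul_periodic_eq_zero ht (fun i => (a (i + 1) : ℤ))
          (g := fun m => if (a (t + 1) : ℤ) ∣ m then (a (t + 1) : ℝ) ^ x else 0)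
          (fun m => by simp only [dvd_add_self_right]) n

theorem stmt_9_general (k : ℕ) (a : ℕ → ℕ) (x : ℝ) (n : ℕ)
    (hn : ∑ j ∈ Finset.Icc 1 k, a j < n) :
    sigmaSeq k a x n =
      ∑ i ∈ Finset.Icc 2 (2 ^ k),
        (-1 : ℝ) ^ binDigitSum (2 * i - 1) *
          sigmaSeq k a x ((n : ℤ) - (bAssocNat k a i : ℤ)) := by
  have htotal : ∑ i ∈ Icc 1 (2 ^ k),
      (-1 : ℝ) ^ binDigitSum (i - 1) * sigmaSeq k a x (n - bAssocNat k a i) = 0 := by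
    rw [sum_Icc_two_pow_eq_sum_powerset, ← sum_powerset_neg_one_pow_card_mul_sigmaSeq_eq_zero x hn]
    refine sum_congr rfl fun s hs => ?_
    rw [Nat.add_sub_cancel, binDigitSum_sum_two_pow,
      bAssocNat_sum_two_pow_add_one (mem_powerset.mp hs), Nat.cast_sum]
  have hfirst : (-1 : ℝ) ^ binDigitSum (1 - 1) * sigmaSeq k a x (n - bAssocNat k a 1) =
      sigmaSeq k a x n := by
    simp [binDigitSum, bAssocNat]
  rw [← insert_Icc_add_one_left_eq_Icc Nat.one_le_two_pow, sum_insert (by simp), hfirst] at htotal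
  rw [eq_neg_of_add_eq_zero_left htotal, ← sum_neg_distrib]
  refine sum_congr rfl fun i hi => ?_
  rw [neg_one_pow_binDigitSum_two_mul_sub_one (one_le_two.trans (mem_Icc.mp hi).1), neg_mul]

/-- If `n > b_{2^k} = a_1 + … + a_k`, the compensating term vanishes and
`σ_x^{(A)}(n) = ∑_{i=2}^{2^k} (-1)^{s(2i-1)} σ_x^{(A)}(n - b_i)`. -/
theorem stmt_9 (k : ℕ) (hk : 1 ≤ k) (a : ℕ → ℕ)
    (hpos : ∀ j, 1 ≤ j → j ≤ k → 0 < a j) (x : ℝ) (n : ℕ)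
    (hn : ∑ j ∈ Finset.Icc 1 k, a j < n) :
    sigmaSeq k a x n =
      ∑ i ∈ Finset.Icc 2 (2 ^ k),
        (-1 : ℝ) ^ binDigitSum (2 * i - 1) *
          sigmaSeq k a x ((n : ℤ) - (bAssocNat k a i : ℤ)) :=
  stmt_9_general k a x n hn
end

section
/- Let A = {2^{j-1} : j ≥ 1} and σ_0^{(A)}(n) = #{ j ≥ 1 : 2^{j-1} | n } (the number of powers of 2 dividing n, i.e., 1 plus the 2-adic valuation of n). Then for every n ≥ 1: ∑_{j=1}^{n} (-1)^{s(n-j)} σ_0^{(A)}(j) = (-1)^{s(n)-1} s(n), where s is the binary digit sum. -/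
/-- `σ_0^{(A)}(n)`, for `A = {2^{j-1} : j ≥ 1}`: the number of powers of `2` dividing `n`,
i.e. `v_2(n) + 1`. -/
def sigma0Pow2 (n : ℕ) : ℕ := padicValNat 2 n + 1

open Finset

theorem binDigitSum_eq_mod_add_div (n : ℕ) : binDigitSum n = n % 2 + binDigitSum (n / 2) := by
  rcases Nat.eq_zero_or_pos n with rfl | hn
  · rfl
  · simp [binDigitSum, Nat.digits_def' one_lt_two hn]

theorem binDigitSum_two_mul (n : ℕ) : binDigitSum (2 * n) = binDigitSum n := by
  simp [binDigitSum_eq_mod_add_div (2 * n)]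

theorem binDigitSum_two_mul_add_one (n : ℕ) : binDigitSum (2 * n + 1) = binDigitSum n + 1 := by
  rw [binDigitSum_eq_mod_add_div, Nat.mul_add_mod, Nat.mul_add_div two_pos]
  simp [add_comm]

theorem binDigitSum_two_pow_mul_add {i r : ℕ} (a : ℕ) (hr : r < 2 ^ i) :
    binDigitSum (2 ^ i * a + r) = binDigitSum a + binDigitSum r := by
  rcases Nat.eq_zero_or_pos a with rfl | ha
  · simp [binDigitSum]
  have hlen : (Nat.digits 2 r).length ≤ i := (Nat.digits_length_le_iff one_lt_two r).mpr hr
  have hdigits := Nat.digits_append_zeroes_append_digits (k := i - (Nat.digits 2 r).length)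
    (n := r) one_lt_two ha
  rw [Nat.add_sub_cancel' hlen] at hdigits
  rw [binDigitSum, add_comm, ← hdigits]
  simp [binDigitSum, add_comm]

theorem sum_range_div_two_pow_mod_two {K n : ℕ} (hn : n < 2 ^ K) :
    ∑ i ∈ range K, n / 2 ^ i % 2 = binDigitSum n := by
  induction K generalizing n with
  | zero => simp_all [binDigitSum]
  | succ K ih =>
    rw [sum_range_succ', binDigitSum_eq_mod_add_div, ← ih (by rw [pow_succ] at hn; omega)]
    simp [pow_succ', Nat.div_div_eq_div_mul, add_comm]

theorem sum_range_two_mul_neg_one_pow_binDigitSum {R : Type*} [Ring R] (u : ℕ) :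
    ∑ m ∈ range (2 * u), (-1 : R) ^ binDigitSum m = 0 := by
  induction u with
  | zero => simp
  | succ u ih =>
    rw [Nat.mul_succ, sum_range_succ, sum_range_succ, ih, binDigitSum_two_mul_add_one,
      binDigitSum_two_mul, pow_succ]
    simp

theorem sum_range_neg_one_pow_binDigitSum {R : Type*} [Ring R] (q : ℕ) :
    ∑ m ∈ range q, (-1 : R) ^ binDigitSum m = (q % 2 : ℕ) * (-1) ^ binDigitSum (q / 2) := by
  obtain ⟨u, rfl | rfl⟩ : ∃ u, q = 2 * u ∨ q = 2 * u + 1 := ⟨q / 2, by omega⟩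
  · simp [sum_range_two_mul_neg_one_pow_binDigitSum]
  · rw [sum_range_succ, sum_range_two_mul_neg_one_pow_binDigitSum, binDigitSum_two_mul]
    simp [Nat.mul_add_div two_pos]

theorem sum_Icc_filter_dvd_sub {M : Type*} [AddCommMonoid M] (f : ℕ → M) {d : ℕ} (hd : 0 < d)
    (n : ℕ) : ∑ j ∈ Icc 1 n with d ∣ j, f (n - j) = ∑ m ∈ range (n / d), f (d * m + n % d) := by
  obtain ⟨q, r, hr, rfl⟩ : ∃ q r, r < d ∧ n = d * q + r :=
    ⟨n / d, n % d, Nat.mod_lt n hd, (Nat.div_add_mod n d).symm⟩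
  rw [Nat.mul_add_div hd, Nat.div_eq_of_lt hr, Nat.mul_add_mod, Nat.mod_eq_of_lt hr, add_zero]
  symm
  have hbound : ∀ k, 1 ≤ d * k → d * k ≤ d * q + r → 1 ≤ k ∧ k ≤ q := fun k h1 h2 =>
    ⟨Nat.pos_of_ne_zero (by rintro rfl; simp at h1),
      Nat.lt_succ_iff.mp (Nat.lt_of_mul_lt_mul_left (a := d) (by rw [Nat.mul_succ]; omega))⟩
  refine sum_nbij' (fun m => d * (q - m)) (fun j => q - j / d) ?_ ?_ ?_ ?_ ?_
  all_goals simp only [mem_Icc, mem_range, mem_filter]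
  · intro m hm
    refine ⟨⟨Nat.one_le_iff_ne_zero.mpr (mul_ne_zero hd.ne' (by omega)), ?_⟩, dvd_mul_right _ _⟩
    exact le_add_right (Nat.mul_le_mul_left _ (Nat.sub_le _ _))
  · rintro _ ⟨⟨h1, h2⟩, k, rfl⟩
    have hk := hbound k h1 h2
    rw [Nat.mul_div_cancel_left _ hd]; omega
  · intro m hm
    rw [Nat.mul_div_cancel_left _ hd]; omega
  · rintro _ ⟨⟨h1, h2⟩, k, rfl⟩
    rw [Nat.mul_div_cancel_left _ hd, Nat.sub_sub_self (hbound k h1 h2).2]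
  · intro m hm
    have hle := Nat.mul_le_mul_left d hm.le
    rw [Nat.mul_sub]
    congr 1
    omega

theorem sigma0Pow2_eq_card_filter {j K : ℕ} (hj : j ≠ 0) (hjK : j < 2 ^ K) :
    sigma0Pow2 j = #{i ∈ range K | 2 ^ i ∣ j} := by
  have hv : padicValNat 2 j < K :=
    (Nat.pow_lt_pow_iff_right one_lt_two).mp
      ((Nat.le_of_dvd (Nat.pos_of_ne_zero hj) pow_padicValNat_dvd).trans_lt hjK)
  have hfilter : {i ∈ range K | 2 ^ i ∣ j} = range (padicValNat 2 j + 1) := by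
    ext i
    simp only [mem_filter, mem_range, padicValNat_dvd_iff, hj, false_or]
    omega
  rw [hfilter, card_range, sigma0Pow2]

theorem sum_Icc_filter_two_pow_dvd_neg_one_pow (n i : ℕ) :
    ∑ j ∈ Icc 1 n with 2 ^ i ∣ j, (-1 : ℤ) ^ binDigitSum (n - j)
      = (n / 2 ^ i % 2 : ℕ) * (-1) ^ (binDigitSum n - 1) := by
  have hr : n % 2 ^ i < 2 ^ i := Nat.mod_lt n (by positivity)
  have hn : binDigitSum n = binDigitSum (n / 2 ^ i) + binDigitSum (n % 2 ^ i) := by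
    conv_lhs => rw [← Nat.div_add_mod n (2 ^ i)]
    exact binDigitSum_two_pow_mul_add _ hr
  rw [sum_Icc_filter_dvd_sub (fun m => (-1 : ℤ) ^ binDigitSum m) (by positivity)]
  simp only [binDigitSum_two_pow_mul_add _ hr, pow_add, ← sum_mul,
    sum_range_neg_one_pow_binDigitSum]
  rcases Nat.mod_two_eq_zero_or_one (n / 2 ^ i) with h | h
  · simp [h]
  · rw [h, hn, binDigitSum_eq_mod_add_div (n / 2 ^ i), h, add_assoc, Nat.add_sub_cancel_left]
    push_cast
    ring

theorem stmt_16_general (n : ℕ) :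
    ∑ j ∈ Finset.Icc 1 n, (-1 : ℤ) ^ binDigitSum (n - j) * (sigma0Pow2 j : ℤ)
      = (-1 : ℤ) ^ (binDigitSum n - 1) * (binDigitSum n : ℤ) := by
  calc ∑ j ∈ Icc 1 n, (-1 : ℤ) ^ binDigitSum (n - j) * (sigma0Pow2 j : ℤ)
      = ∑ j ∈ Icc 1 n, ∑ i ∈ range n,
          if 2 ^ i ∣ j then (-1 : ℤ) ^ binDigitSum (n - j) else 0 := by
        refine sum_congr rfl fun j hj => ?_
        rw [mem_Icc] at hj
        rw [sigma0Pow2_eq_card_filter (by omega) (hj.2.trans_lt n.lt_two_pow_self), card_filter,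
          Nat.cast_sum, mul_sum]
        simp
    _ = ∑ i ∈ range n, ((n / 2 ^ i % 2 : ℕ) : ℤ) * (-1) ^ (binDigitSum n - 1) := by
        rw [sum_comm]
        simp_rw [← sum_filter, sum_Icc_filter_two_pow_dvd_neg_one_pow]
    _ = (-1 : ℤ) ^ (binDigitSum n - 1) * (binDigitSum n : ℤ) := by
        rw [← sum_mul, ← Nat.cast_sum, sum_range_div_two_pow_mod_two n.lt_two_pow_self, mul_comm]

/-- `∑_{j=1}^{n} (-1)^{s(n-j)} σ_0^{(A)}(j) = (-1)^{s(n)-1} s(n)` for all `n ≥ 1`. -/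
theorem stmt_16 (n : ℕ) (hn : 1 ≤ n) :
    ∑ j ∈ Finset.Icc 1 n, (-1 : ℤ) ^ binDigitSum (n - j) * (sigma0Pow2 j : ℤ)
      = (-1 : ℤ) ^ (binDigitSum n - 1) * (binDigitSum n : ℤ) :=
  stmt_16_general n
end
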